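/- Let q be a prime with n < q ≤ 2n and n > 3. In the 3-colorability protocol, suppose for every node u the prover's polynomials satisfy P̃_u(i) = 0 for all i ∈ {0,1,2}, where P̃_u = P̃⁰_u + Σ_{v∈N(u)} H̃_v, yet there exists a node u with a neighbor v such that col(u) = col(v) (colors derived from the prover's messages). Then, for i* chosen uniformly at random from F_q \ {0,1,2}, the probability that P̃_u(i*) = Σ_{v∈N(u)} C_u(i*)·C_v(i*) is at most 6/(n-3). -/
import Mathlib


/-- Soundness of the 3-colorability protocol. If all the prover-supplied
polynomials `P̃_u = P̃⁰_u + ∑_{v ∈ N(u)} H̃_v` vanish on `{0,1,2}` but some node `u`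
has a neighbor `v` with `col u = col v`, then for `i*` uniform over `F_q \ {0,1,2}`,
`P̃_u(i*) = ∑_{v ∈ N(u)} C_u(i*)·C_v(i*)` holds with probability at most `6/(n-3)`. -/
theorem stmt_13 {V : Type*} [Fintype V] [DecidableEq V]
    (G : SimpleGraph V) [DecidableRel G.Adj]
    (n q : ℕ) (hn : Fintype.card V = n) (hn3 : 3 < n)
    [Fact (Nat.Prime q)] (hq1 : n < q) (hq2 : q ≤ 2 * n)
    (col : V → ZMod q) (hcol : ∀ w, col w = 0 ∨ col w = 1 ∨ col w = 2)
    (r : V → ZMod q) (C : V → Polynomial (ZMod q))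
    (hCdeg : ∀ w, (C w).degree ≤ 3)
    (hCval : ∀ w, ∀ i : ZMod q, (i = 0 ∨ i = 1 ∨ i = 2) →
      (C w).eval i = if i = col w then 1 else 0)
    (hCr : ∀ w, (C w).eval 3 = r w)
    (P0 H : V → Polynomial (ZMod q))
    (hP0deg : ∀ w, (P0 w).degree ≤ 6) (hHdeg : ∀ w, (H w).degree ≤ 6)
    (Ptilde : V → Polynomial (ZMod q))
    (hPtilde : ∀ w, Ptilde w = P0 w + ∑ v ∈ G.neighborFinset w, H v)
    (hvanish : ∀ w, ∀ i : ZMod q, (i = 0 ∨ i = 1 ∨ i = 2) → (Ptilde w).eval i = 0)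
    (u v : V) (hadj : G.Adj u v) (hsame : col u = col v) :
    (((Finset.univ \ ({0, 1, 2} : Finset (ZMod q))).filter
        (fun i => (Ptilde u).eval i =
          ∑ w ∈ G.neighborFinset u, (C u).eval i * (C w).eval i)).card : ℚ)
      / ((q : ℚ) - 3)
      ≤ 6 / ((n : ℚ) - 3) := by
  classical
  set S := ((Finset.univ \ ({0, 1, 2} : Finset (ZMod q))).filter
        (fun i => (Ptilde u).eval i =
          ∑ w ∈ G.neighborFinset u, (C u).eval i * (C w).eval i)) with hS
  have hcard : S.card ≤ 6 := by
    set Q : Polynomial (ZMod q) :=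
      Ptilde u - ∑ w ∈ G.neighborFinset u, C u * C w with hQ
    have hQdeg : Q.degree ≤ 6 := by
      refine le_trans (Polynomial.degree_sub_le _ _) (max_le ?_ ?_)
      · rw [hPtilde]
        refine le_trans (Polynomial.degree_add_le _ _) (max_le (hP0deg u) ?_)
        exact le_trans (Polynomial.degree_sum_le _ _)
          (Finset.sup_le fun w _ => hHdeg w)
      · refine le_trans (Polynomial.degree_sum_le _ _)
          (Finset.sup_le fun w _ => ?_)
        refine le_trans (Polynomial.degree_mul_le _ _) ?_
        calc (C u).degree + (C w).degree ≤ 3 + 3 :=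
              add_le_add (hCdeg u) (hCdeg w)
          _ = 6 := by decide
    -- count of same-colored neighbors
    set m := ((G.neighborFinset u).filter fun w => col u = col w).card with hm
    have hmpos : 0 < m := by
      refine Finset.card_pos.2 ⟨v, Finset.mem_filter.2 ⟨?_, hsame⟩⟩
      exact (SimpleGraph.mem_neighborFinset G u v).2 hadj
    have hmlt : m < q := by
      calc m ≤ (G.neighborFinset u).card := Finset.card_filter_le _ _
        _ ≤ Fintype.card V := Finset.card_le_univ _
        _ = n := hn
        _ < q := hq1
    have hsum : (∑ w ∈ G.neighborFinset u, (C u).eval (col u) * (C w).eval (col u))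
        = (m : ZMod q) := by
      have hCu : (C u).eval (col u) = 1 := by
        rw [hCval u (col u) (hcol u), if_pos rfl]
      rw [Finset.sum_congr rfl (fun w _ => by
        rw [hCu, hCval w (col u) (hcol u), one_mul])]
      simp [hm, Finset.sum_boole]
    have hQne : Q ≠ 0 := by
      intro h0
      have : Q.eval (col u) = 0 := by rw [h0]; simp
      rw [hQ] at this
      simp only [Polynomial.eval_sub, Polynomial.eval_finset_sum,
        Polynomial.eval_mul] at this
      rw [hvanish u (col u) (hcol u), hsum] at this
      have hz : (m : ZMod q) = 0 := by linear_combination -this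
      rw [ZMod.natCast_eq_zero_iff] at hz
      exact absurd (Nat.le_of_dvd hmpos hz) (not_le.2 hmlt)
    have hsub : S ⊆ Q.roots.toFinset := by
      intro i hi
      rw [hS, Finset.mem_filter] at hi
      rw [Multiset.mem_toFinset, Polynomial.mem_roots hQne]
      rw [hQ, Polynomial.IsRoot, Polynomial.eval_sub]
      simp only [Polynomial.eval_finset_sum, Polynomial.eval_mul]
      rw [← hi.2]
      ring
    calc S.card ≤ Q.roots.toFinset.card := Finset.card_le_card hsub
      _ ≤ Multiset.card Q.roots := Q.roots.toFinset_card_le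
      _ ≤ Q.natDegree := Polynomial.card_roots' Q
      _ ≤ 6 := Polynomial.natDegree_le_iff_degree_le.2 hQdeg
  have h1 : (S.card : ℚ) ≤ 6 := by exact_mod_cast hcard
  have h2 : (0 : ℚ) < (n : ℚ) - 3 := by
    have : (3 : ℚ) < n := by exact_mod_cast hn3
    linarith
  have h3 : (n : ℚ) - 3 ≤ (q : ℚ) - 3 := by
    have : (n : ℚ) < q := by exact_mod_cast hq1
    linarith
  exact div_le_div₀ (by norm_num) h1 h2 h3
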